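/- For every θ ∈ [0,1], the set G₁ = {y ∈ Δ² : y₁ ≥ y₂ ≥ y₃} is invariant under V_θ (i.e. V_θ(G₁) ⊆ G₁). Moreover, for every θ ∈ [0,1] with θ ≠ 2/3, the set of fixed points of V_θ on Δ² is exactly 𝒜 = {(1,0,0),(0,1,0),(0,0,1),(1/2,1/2,0),(1/2,0,1/2),(0,1/2,1/2),(1/3,1/3,1/3)}. -/

import Mathlib

open MeasureTheory ProbabilityTheory Filter Topology
open scoped ENNReal

noncomputable section

/-- The cubic stochastic operator `V_θ`, regarded as a map on (Euclidean) `ℝ³`. -/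
def Vcso (θ : ℝ) (x : EuclideanSpace ℝ (Fin 3)) : EuclideanSpace ℝ (Fin 3) :=
  WithLp.toLp 2 ![x 0 * ((x 0)^2 + 3*θ*(x 0)*(x 1 + x 2) + 3*(1-θ)*((x 1)^2 + (x 2)^2) + 2*(x 1)*(x 2)),
    x 1 * ((x 1)^2 + 3*θ*(x 1)*(x 2 + x 0) + 3*(1-θ)*((x 2)^2 + (x 0)^2) + 2*(x 2)*(x 0)),
    x 2 * ((x 2)^2 + 3*θ*(x 2)*(x 0 + x 1) + 3*(1-θ)*((x 0)^2 + (x 1)^2) + 2*(x 0)*(x 1))]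

/-- The simplex `Δ² = {x ∈ ℝ³ : x₁,x₂,x₃ ≥ 0, x₁+x₂+x₃ = 1}`. -/
def simplex2 : Set (EuclideanSpace ℝ (Fin 3)) :=
  {x | 0 ≤ x 0 ∧ 0 ≤ x 1 ∧ 0 ≤ x 2 ∧ x 0 + x 1 + x 2 = 1}

/-- The random orbit `φ_n(x) = V_{θ_n} ∘ ⋯ ∘ V_{θ_1}(x)` driven by the sequence
`θ_1, θ_2, … = θs 0, θs 1, …`. -/
def phiRDS (θs : ℕ → ℝ) : ℕ → EuclideanSpace ℝ (Fin 3) → EuclideanSpace ℝ (Fin 3)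
  | 0, x => x
  | n+1, x => Vcso (θs n) (phiRDS θs n x)

/-- The vertex `e₁ = (1,0,0)`. -/
def e1 : EuclideanSpace ℝ (Fin 3) := WithLp.toLp 2 (![1, 0, 0] : Fin 3 → ℝ)

/-- The vertex `c = (1/2,1/2,0)`. -/
def cpt : EuclideanSpace ℝ (Fin 3) := WithLp.toLp 2 (![1/2, 1/2, 0] : Fin 3 → ℝ)

/-- The vertex `C = (1/3,1/3,1/3)`. -/
def Cpt : EuclideanSpace ℝ (Fin 3) := WithLp.toLp 2 (![1/3, 1/3, 1/3] : Fin 3 → ℝ)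

/-- `G₁ = {y ∈ Δ² : y₁ ≥ y₂ ≥ y₃}`. -/
def G1 : Set (EuclideanSpace ℝ (Fin 3)) :=
  {y ∈ simplex2 | y 0 ≥ y 1 ∧ y 1 ≥ y 2}

/-- The interior of `G₁`: `{y ∈ Δ² : y₁ > y₂ > y₃ > 0}`. -/
def intG1 : Set (EuclideanSpace ℝ (Fin 3)) :=
  {y ∈ simplex2 | y 0 > y 1 ∧ y 1 > y 2 ∧ y 2 > 0}

/-- The edge `M₁₂ = {y ∈ Δ² : y₁ = y₂ ≥ y₃}`. -/
def M12 : Set (EuclideanSpace ℝ (Fin 3)) :=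
  {y ∈ simplex2 | y 0 = y 1 ∧ y 1 ≥ y 2}

/-- The edge `M₂₃ = {y ∈ Δ² : y₁ ≥ y₂ = y₃}`. -/
def M23 : Set (EuclideanSpace ℝ (Fin 3)) :=
  {y ∈ simplex2 | y 0 ≥ y 1 ∧ y 1 = y 2}

/-- The edge `Γ₁₂ = {y ∈ Δ² : y₁ ≥ y₂, y₃ = 0}`. -/
def Gamma12 : Set (EuclideanSpace ℝ (Fin 3)) :=
  {y ∈ simplex2 | y 0 ≥ y 1 ∧ y 2 = 0}

/-- The seven fixed points `𝒜`. -/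
def fixedA : Set (EuclideanSpace ℝ (Fin 3)) :=
  {WithLp.toLp 2 (![1,0,0] : Fin 3 → ℝ), WithLp.toLp 2 (![0,1,0] : Fin 3 → ℝ), WithLp.toLp 2 (![0,0,1] : Fin 3 → ℝ), WithLp.toLp 2 (![1/2,1/2,0] : Fin 3 → ℝ), WithLp.toLp 2 (![1/2,0,1/2] : Fin 3 → ℝ), WithLp.toLp 2 (![0,1/2,1/2] : Fin 3 → ℝ), WithLp.toLp 2 (![1/3,1/3,1/3] : Fin 3 → ℝ)}

/-- Positive part of `log t`, valued in `ℝ≥0∞`. -/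
def logPos (t : ℝ) : ℝ≥0∞ := ENNReal.ofReal (Real.log t)

/-- Negative part of the extended logarithm (with `log 0 = -∞`), valued in `ℝ≥0∞`. -/
def logNeg (t : ℝ) : ℝ≥0∞ := if t ≤ 0 then ⊤ else ENNReal.ofReal (-Real.log t)

/-- `E log g(Θ) < 0` in the extended sense (the value `-∞` is allowed), where `Θ` has law `μ`:
the positive part of the extended expectation is strictly smaller than the negative part. -/
def expLogNeg (μ : Measure ℝ) (g : ℝ → ℝ) : Prop :=
  ∫⁻ θ, logPos (g θ) ∂μ < ∫⁻ θ, logNeg (g θ) ∂μ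

/-- `E log g(Θ) ≤ r` in the extended sense (the value `-∞` is allowed), where `Θ` has law `μ`. -/
def expLogLe (μ : Measure ℝ) (g : ℝ → ℝ) (r : ℝ) : Prop :=
  ∫⁻ θ, logPos (g θ) ∂μ + ENNReal.ofReal (-r) ≤ ∫⁻ θ, logNeg (g θ) ∂μ + ENNReal.ofReal r

/-- The topological support of a measure on `ℝ`: points all of whose open neighborhoods
have positive measure. -/
def measSupport (μ : Measure ℝ) : Set ℝ :=
  {t : ℝ | ∀ U : Set ℝ, IsOpen U → t ∈ U → 0 < μ U}

/-!
Each coordinate of `V_θ x` is `cubicCoord θ` of a cyclic shift of `x`; the three sum to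
`(x₁ + x₂ + x₃)³`, and the difference of two consecutive ones factors as `(xᵢ - xⱼ)` times
`pairGap`, a form that is nonnegative on `ℝ³₊` for `θ ∈ [0, 1]`. This gives the invariance of
`Δ²` and of the order `x₁ ≥ x₂ ≥ x₃`.

At a fixed point every consecutive pair of coordinates is either equal or has `pairGap = 1`.
On `Δ²` two such gap equations differ by `(2 - 3θ)(x₁ - x₃)`, so for `θ ≠ 2/3` some two
coordinates agree. On the median `(1 - 2b, b, b)` the gap equation reads
`(2 - 3θ) b (2b - 1) = 0`, leaving `b ∈ {0, 1/2}` besides the centre.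
-/

def cubicCoord (θ a b c : ℝ) : ℝ :=
  a * (a ^ 2 + 3 * θ * a * (b + c) + 3 * (1 - θ) * (b ^ 2 + c ^ 2) + 2 * b * c)

def pairGap (θ a b c : ℝ) : ℝ :=
  (a - b) ^ 2 + 6 * θ * a * b + 3 * θ * c * (a + b) + 3 * (1 - θ) * c ^ 2

section cubicCoord

variable {θ a b c : ℝ}

theorem cubicCoord_add_cubicCoord_add_cubicCoord (θ a b c : ℝ) :
    cubicCoord θ a b c + cubicCoord θ b c a + cubicCoord θ c a b = (a + b + c) ^ 3 := by
  unfold cubicCoord; ring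

theorem cubicCoord_sub_cubicCoord (θ a b c : ℝ) :
    cubicCoord θ a b c - cubicCoord θ b c a = (a - b) * pairGap θ a b c := by
  unfold cubicCoord pairGap; ring

theorem pairGap_comm (θ a b c : ℝ) : pairGap θ a b c = pairGap θ b a c := by
  unfold pairGap; ring

theorem pairGap_sub_pairGap (θ a b c : ℝ) :
    pairGap θ b c a - pairGap θ a b c = (2 - 3 * θ) * (a - c) * (a + b + c) := by
  unfold pairGap; ring

theorem cubicCoord_nonneg (hθ : θ ∈ Set.Icc (0 : ℝ) 1) (ha : 0 ≤ a) (hb : 0 ≤ b) (hc : 0 ≤ c) :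
    0 ≤ cubicCoord θ a b c := by
  obtain ⟨hθ₀, hθ₁⟩ := hθ
  have h1θ : 0 ≤ 1 - θ := sub_nonneg.mpr hθ₁
  unfold cubicCoord
  positivity

theorem pairGap_nonneg (hθ : θ ∈ Set.Icc (0 : ℝ) 1) (ha : 0 ≤ a) (hb : 0 ≤ b) (hc : 0 ≤ c) :
    0 ≤ pairGap θ a b c := by
  obtain ⟨hθ₀, hθ₁⟩ := hθ
  have h1θ : 0 ≤ 1 - θ := sub_nonneg.mpr hθ₁
  unfold pairGap
  positivity

theorem cubicCoord_le_cubicCoord (hθ : θ ∈ Set.Icc (0 : ℝ) 1) (ha : 0 ≤ a) (hb : 0 ≤ b)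
    (hc : 0 ≤ c) (hba : b ≤ a) : cubicCoord θ b c a ≤ cubicCoord θ a b c := by
  rw [← sub_nonneg, cubicCoord_sub_cubicCoord]
  exact mul_nonneg (sub_nonneg.mpr hba) (pairGap_nonneg hθ ha hb hc)

theorem eq_zero_or_eq_half_of_pairGap_eq_one (hθ : θ ≠ 2 / 3) (hs : a + 2 * b = 1)
    (h : pairGap θ a b b = 1) : b = 0 ∨ b = 1 / 2 := by
  have hθ' : 2 - 3 * θ ≠ 0 := fun h' => hθ (by linarith)
  have key : (2 - 3 * θ) * (b * (2 * b - 1)) = 0 := by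
    rw [show a = 1 - 2 * b by linarith] at h
    unfold pairGap at h
    linear_combination h / 3
  rcases mul_eq_zero.mp ((mul_eq_zero.mp key).resolve_left hθ') with hb | hb
  · exact Or.inl hb
  · exact Or.inr (by linarith)

theorem cubicCoord_fixed_cases (hθ : θ ≠ 2 / 3) (hs : a + b + c = 1)
    (h₀ : cubicCoord θ a b c = a) (h₁ : cubicCoord θ b c a = b) (h₂ : cubicCoord θ c a b = c) :
    (a = 1 ∧ b = 0 ∧ c = 0) ∨ (a = 0 ∧ b = 1 ∧ c = 0) ∨ (a = 0 ∧ b = 0 ∧ c = 1) ∨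
    (a = 1/2 ∧ b = 1/2 ∧ c = 0) ∨ (a = 1/2 ∧ b = 0 ∧ c = 1/2) ∨ (a = 0 ∧ b = 1/2 ∧ c = 1/2) ∨
    (a = 1/3 ∧ b = 1/3 ∧ c = 1/3) := by
  have hab : (a - b) * (pairGap θ a b c - 1) = 0 := by
    linear_combination h₀ - h₁ - cubicCoord_sub_cubicCoord θ a b c
  have hbc : (b - c) * (pairGap θ b c a - 1) = 0 := by
    linear_combination h₁ - h₂ - cubicCoord_sub_cubicCoord θ b c a
  rcases mul_eq_zero.mp hab with hab | hgab <;> rcases mul_eq_zero.mp hbc with hbc | hgbc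
  · obtain rfl := sub_eq_zero.mp hab
    obtain rfl := sub_eq_zero.mp hbc
    right; right; right; right; right; right; refine ⟨?_, ?_, ?_⟩ <;> linarith
  · obtain rfl := sub_eq_zero.mp hab
    rw [pairGap_comm] at hgbc
    rcases eq_zero_or_eq_half_of_pairGap_eq_one hθ (by linarith) (sub_eq_zero.mp hgbc) with
      rfl | rfl
    · right; right; left; refine ⟨rfl, rfl, ?_⟩; linarith
    · right; right; right; left; refine ⟨rfl, rfl, ?_⟩; linarith
  · obtain rfl := sub_eq_zero.mp hbc
    rcases eq_zero_or_eq_half_of_pairGap_eq_one hθ (by linarith) (sub_eq_zero.mp hgab) with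
      rfl | rfl
    · left; refine ⟨?_, rfl, rfl⟩; linarith
    · right; right; right; right; right; left; refine ⟨?_, rfl, rfl⟩; linarith
  · have hθ' : 2 - 3 * θ ≠ 0 := fun h' => hθ (by linarith)
    have hac : (2 - 3 * θ) * (a - c) = 0 := by
      linear_combination hgbc - hgab - pairGap_sub_pairGap θ a b c - (2 - 3 * θ) * (a - c) * hs
    obtain rfl := sub_eq_zero.mp ((mul_eq_zero.mp hac).resolve_left hθ')
    rcases eq_zero_or_eq_half_of_pairGap_eq_one hθ (by linarith) (sub_eq_zero.mp hgbc) with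
      rfl | rfl
    · right; left; refine ⟨rfl, ?_, rfl⟩; linarith
    · right; right; right; right; left; refine ⟨rfl, ?_, rfl⟩; linarith

end cubicCoord

section Vcso

variable {θ : ℝ} {x : EuclideanSpace ℝ (Fin 3)}

theorem Vcso_apply_zero : Vcso θ x 0 = cubicCoord θ (x 0) (x 1) (x 2) := rfl

theorem Vcso_apply_one : Vcso θ x 1 = cubicCoord θ (x 1) (x 2) (x 0) := rfl

theorem Vcso_apply_two : Vcso θ x 2 = cubicCoord θ (x 2) (x 0) (x 1) := rfl

theorem eq_toLp_vec3_iff {a b c : ℝ} :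
    x = WithLp.toLp 2 ![a, b, c] ↔ x 0 = a ∧ x 1 = b ∧ x 2 = c := by
  constructor
  · rintro rfl
    simp
  · rintro ⟨h₀, h₁, h₂⟩
    ext i
    fin_cases i <;> simpa

theorem Vcso_eq_self_iff : Vcso θ x = x ↔
    cubicCoord θ (x 0) (x 1) (x 2) = x 0 ∧ cubicCoord θ (x 1) (x 2) (x 0) = x 1 ∧
      cubicCoord θ (x 2) (x 0) (x 1) = x 2 := by
  rw [eq_comm]
  exact eq_toLp_vec3_iff.trans (and_congr eq_comm (and_congr eq_comm eq_comm))

theorem Vcso_mapsTo_simplex2 (hθ : θ ∈ Set.Icc (0 : ℝ) 1) :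
    Set.MapsTo (Vcso θ) simplex2 simplex2 := by
  rintro x ⟨h₀, h₁, h₂, hs⟩
  refine ⟨cubicCoord_nonneg hθ h₀ h₁ h₂, cubicCoord_nonneg hθ h₁ h₂ h₀,
    cubicCoord_nonneg hθ h₂ h₀ h₁, ?_⟩
  rw [Vcso_apply_zero, Vcso_apply_one, Vcso_apply_two,
    cubicCoord_add_cubicCoord_add_cubicCoord, hs, one_pow]

theorem Vcso_mapsTo_G1 (hθ : θ ∈ Set.Icc (0 : ℝ) 1) : Set.MapsTo (Vcso θ) G1 G1 := by
  rintro x ⟨⟨h₀, h₁, h₂, hs⟩, h₁₀, h₂₁⟩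
  exact ⟨Vcso_mapsTo_simplex2 hθ ⟨h₀, h₁, h₂, hs⟩, cubicCoord_le_cubicCoord hθ h₀ h₁ h₂ h₁₀,
    cubicCoord_le_cubicCoord hθ h₁ h₂ h₀ h₂₁⟩

theorem mem_fixedA_iff : x ∈ fixedA ↔
    (x 0 = 1 ∧ x 1 = 0 ∧ x 2 = 0) ∨ (x 0 = 0 ∧ x 1 = 1 ∧ x 2 = 0) ∨
    (x 0 = 0 ∧ x 1 = 0 ∧ x 2 = 1) ∨ (x 0 = 1/2 ∧ x 1 = 1/2 ∧ x 2 = 0) ∨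
    (x 0 = 1/2 ∧ x 1 = 0 ∧ x 2 = 1/2) ∨ (x 0 = 0 ∧ x 1 = 1/2 ∧ x 2 = 1/2) ∨
    (x 0 = 1/3 ∧ x 1 = 1/3 ∧ x 2 = 1/3) := by
  simp only [fixedA, Set.mem_insert_iff, Set.mem_singleton_iff, eq_toLp_vec3_iff]

theorem setOf_fixed_Vcso_eq_fixedA (hθ : θ ≠ 2 / 3) :
    {x ∈ simplex2 | Vcso θ x = x} = fixedA := by
  ext x
  rw [Set.mem_sep_iff, Vcso_eq_self_iff, mem_fixedA_iff]
  constructor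
  · rintro ⟨⟨-, -, -, hs⟩, h₀, h₁, h₂⟩
    exact cubicCoord_fixed_cases hθ hs h₀ h₁ h₂
  · rintro (⟨h₀, h₁, h₂⟩ | ⟨h₀, h₁, h₂⟩ | ⟨h₀, h₁, h₂⟩ | ⟨h₀, h₁, h₂⟩ | ⟨h₀, h₁, h₂⟩ |
      ⟨h₀, h₁, h₂⟩ | ⟨h₀, h₁, h₂⟩) <;>
    · simp only [simplex2, Set.mem_ofPred_eq, cubicCoord, h₀, h₁, h₂]
      norm_num <;> ring

end Vcso

/-- G₁ is invariant under each V_θ, and for θ ≠ 2/3 the fixed point set of V_θ on Δ²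
is exactly 𝒜. -/
theorem G1_invariant_and_fixed_points :
    (∀ θ ∈ Set.Icc (0:ℝ) 1, ∀ x ∈ G1, Vcso θ x ∈ G1) ∧
    (∀ θ ∈ Set.Icc (0:ℝ) 1, θ ≠ 2/3 → {x ∈ simplex2 | Vcso θ x = x} = fixedA) :=
  ⟨fun _ hθ => Vcso_mapsTo_G1 hθ, fun _ _ hθ => setOf_fixed_Vcso_eq_fixedA hθ⟩
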